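/- Let X be a non-negative integer-valued random variable satisfying the distributional equation X =_D (X^{(r)}+1)·B(X^{(r)}+1), where B(k) is Bernoulli(1/k). Then its probability generating function φ(s) = Σ_k s^k P(X=k) satisfies the differential equation φ'(s) = φ(s)^r for all s ∈ [0,1). -/

import Mathlib

open scoped ENNReal

/-- Law of `(j+1)·B(j+1)` : takes value `j+1` with probability `1/(j+1)` and `0` otherwise. -/
noncomputable def Bstep (j : ℕ) : PMF ℕ :=
  (PMF.bernoulli ((j + 1 : NNReal))⁻¹
      (inv_le_one_of_one_le₀ (by exact_mod_cast Nat.one_le_iff_ne_zero.mpr (Nat.succ_ne_zero j)))).map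
    (fun b => if b then j + 1 else 0)

/-- Law of the sum of `r` i.i.d. copies of a random variable with law `p`
(the `r`-fold convolution). -/
noncomputable def conv : ℕ → PMF ℕ → PMF ℕ
  | 0, _ => PMF.pure 0
  | r + 1, p => (conv r p).bind fun a => p.map fun b => a + b

/-- The sequence `X_{d,r}`: `X_{0,r} = 1` and
`X_{d,r} = (X_{d-1,r}^{(r)} + 1)·B(X_{d-1,r}^{(r)} + 1)`. -/
noncomputable def Xd : ℕ → ℕ → PMF ℕ
  | 0, _ => PMF.pure 1
  | d + 1, r => (conv r (Xd d r)).bind Bstep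

/-- The sequence `Y_{d,r}`: `Y_{0,r} = 0` and
`Y_{d,r} = ((Y_{d-1,r} + 1)·B(Y_{d-1,r} + 1))^{(r)}`. -/
noncomputable def Yd : ℕ → ℕ → PMF ℕ
  | 0, _ => PMF.pure 0
  | d + 1, r => conv r ((Yd d r).bind Bstep)


/-! The fixed-point equation says exactly that `(k + 1) P(X = k + 1) = P(X^{(r)} = k)`: the
termwise derivative of `φ` is the generating function of `X^{(r)}`, which is `φ^r`. Generating
functions are computed in `ℝ≥0∞`, where every series converges and can be reindexed freely, and
moved to `ℝ` only at the end; termwise differentiation is legitimate on `|s| < 1` because the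
coefficients are bounded. -/

theorem hasDerivAt_tsum_pow_mul {𝕜 : Type*} [RCLike 𝕜] {a : ℕ → 𝕜} {C : ℝ}
    (ha : ∀ k, ‖a k‖ ≤ C) {s : 𝕜} (hs : ‖s‖ < 1) :
    HasDerivAt (fun t => ∑' k : ℕ, t ^ k * a k) (∑' k : ℕ, (k : 𝕜) * s ^ (k - 1) * a k) s := by
  obtain ⟨R, hsR, hR1⟩ := exists_between hs
  have hR0 : 0 < R := (norm_nonneg s).trans_lt hsR
  have hC : 0 ≤ C := (norm_nonneg _).trans (ha 0)
  have hu : Summable fun k : ℕ => k * R ^ (k - 1) * C := by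
    refine ((summable_pow_mul_geometric_of_norm_lt_one 1
      (by rwa [Real.norm_of_nonneg hR0.le])).mul_right (C / R)).congr fun k => ?_
    rcases k with _ | k
    · simp
    · rw [pow_one, Nat.add_sub_cancel, pow_succ]
      field_simp
  have hs_mem : s ∈ Metric.ball 0 R := mem_ball_zero_iff.mpr hsR
  refine hasDerivAt_tsum_of_isPreconnected (g' := fun (k : ℕ) t => k * t ^ (k - 1) * a k)
    hu Metric.isOpen_ball (convex_ball 0 R).isPreconnected
    (fun k t _ => (hasDerivAt_pow k t).mul_const (a k)) (fun k t ht => ?_) hs_mem ?_ hs_mem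
  · rw [mem_ball_zero_iff] at ht
    rw [norm_mul, norm_mul, norm_pow, RCLike.norm_natCast]
    gcongr
    exact ha k
  · refine .of_norm_bounded ((summable_geometric_of_lt_one (norm_nonneg s) hs).mul_right C)
      fun k => ?_
    rw [norm_mul, norm_pow]
    gcongr
    exact ha k

namespace PMF

noncomputable def pgf (q : PMF ℕ) (x : ℝ≥0∞) : ℝ≥0∞ := ∑' k, x ^ k * q k

theorem pgf_bind {α : Type*} (q : PMF α) (f : α → PMF ℕ) (x : ℝ≥0∞) :
    pgf (q.bind f) x = ∑' a, q a * pgf (f a) x := by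
  simp only [pgf, bind_apply, ← ENNReal.tsum_mul_left]
  rw [ENNReal.tsum_comm]
  exact tsum_congr fun a => tsum_congr fun k => by ring

theorem pgf_map_add_left (q : PMF ℕ) (a : ℕ) (x : ℝ≥0∞) :
    pgf (q.map (a + ·)) x = x ^ a * pgf q x := by
  simp only [pgf, map_apply, ← ENNReal.tsum_mul_left]
  rw [ENNReal.tsum_comm]
  refine tsum_congr fun b => ?_
  rw [tsum_eq_single (a + b) fun k hk => by simp [hk]]
  simp [pow_add, mul_assoc]

theorem pgf_pure_zero (x : ℝ≥0∞) : pgf (pure 0) x = 1 := by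
  rw [pgf, tsum_eq_single 0 fun k hk => by simp [hk]]
  simp

theorem tsum_pow_mul_toReal (q : PMF ℕ) {t : ℝ} (ht : 0 ≤ t) :
    ∑' k : ℕ, t ^ k * (q k).toReal = (pgf q (ENNReal.ofReal t)).toReal := by
  rw [pgf, ENNReal.tsum_toReal_eq fun k => ENNReal.mul_ne_top (by finiteness) (q.apply_ne_top k)]
  simp [ENNReal.toReal_pow, ht]

theorem tsum_natCast_mul_pow_pred_mul_toReal (q : PMF ℕ) {t : ℝ} (ht : 0 ≤ t) :
    ∑' k : ℕ, (k : ℝ) * t ^ (k - 1) * (q k).toReal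
      = (∑' k : ℕ, (k : ℝ≥0∞) * ENNReal.ofReal t ^ (k - 1) * q k).toReal := by
  rw [ENNReal.tsum_toReal_eq fun k => ENNReal.mul_ne_top (by finiteness) (q.apply_ne_top k)]
  simp [ENNReal.toReal_pow, ht]

end PMF

open PMF

theorem pgf_conv (r : ℕ) (q : PMF ℕ) (x : ℝ≥0∞) : pgf (conv r q) x = pgf q x ^ r := by
  induction r with
  | zero => rw [conv, pow_zero, pgf_pure_zero]
  | succ r ih =>
    rw [conv, pgf_bind, pow_succ, ← ih, pgf, ← ENNReal.tsum_mul_right]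
    exact tsum_congr fun a => by rw [pgf_map_add_left]; ring

theorem Bstep_apply_succ (j k : ℕ) :
    Bstep j (k + 1) = if k = j then ((j : ℝ≥0∞) + 1)⁻¹ else 0 := by
  simp only [Bstep, PMF.map_apply, PMF.bernoulli_apply]
  rw [tsum_eq_single true fun b hb => by cases b <;> simp at hb ⊢]
  by_cases h : k = j <;> simp [h, ENNReal.coe_inv]

theorem succ_mul_bind_Bstep_apply_succ (q : PMF ℕ) (k : ℕ) :
    ((k : ℝ≥0∞) + 1) * q.bind Bstep (k + 1) = q k := by
  rw [PMF.bind_apply, tsum_eq_single k fun j hj => by simp [Bstep_apply_succ, Ne.symm hj],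
    Bstep_apply_succ, if_pos rfl, mul_left_comm,
    ENNReal.mul_inv_cancel (by positivity) (by simp), mul_one]

theorem tsum_natCast_mul_pow_pred_mul_bind_Bstep (q : PMF ℕ) (x : ℝ≥0∞) :
    ∑' k : ℕ, (k : ℝ≥0∞) * x ^ (k - 1) * q.bind Bstep k = pgf q x := by
  rw [tsum_eq_zero_add' ENNReal.summable, pgf]
  simp only [CharP.cast_eq_zero, zero_mul, zero_add, Nat.cast_succ, Nat.add_sub_cancel]
  exact tsum_congr fun k => by rw [mul_right_comm, succ_mul_bind_Bstep_apply_succ, mul_comm]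

/-- If `X =_D (X^{(r)}+1)·B(X^{(r)}+1)`, then its probability generating function
`φ(s) = Σ_k s^k P(X=k)` satisfies `φ'(s) = φ(s)^r` on `[0,1)`. -/
theorem pgf_satisfies_ode (r : ℕ) (p : PMF ℕ) (hfix : p = (conv r p).bind Bstep) :
    ∀ s ∈ Set.Ico (0 : ℝ) 1,
      HasDerivAt (fun t : ℝ => ∑' k : ℕ, t ^ k * (p k).toReal)
        ((∑' k : ℕ, s ^ k * (p k).toReal) ^ r) s := by
  rintro s ⟨hs0, hs1⟩
  have hp_le_one : ∀ k, ‖(p k).toReal‖ ≤ 1 := fun k => by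
    rw [Real.norm_of_nonneg ENNReal.toReal_nonneg]
    exact ENNReal.toReal_le_of_le_ofReal zero_le_one (by simpa using p.coe_le_one k)
  refine (hasDerivAt_tsum_pow_mul hp_le_one (by rwa [Real.norm_of_nonneg hs0])).congr_deriv ?_
  rw [p.tsum_natCast_mul_pow_pred_mul_toReal hs0, p.tsum_pow_mul_toReal hs0]
  conv_lhs => rw [hfix]
  rw [tsum_natCast_mul_pow_pred_mul_bind_Bstep, pgf_conv, ENNReal.toReal_pow]
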